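/- (Theorem 2.4, main case) For λ ∈ ℝ, r a nonnegative integer, and nonnegative integers n, k with n ≥ k, one has (1/k!) Σ_{m=0}^{n} λ^{n−m} S_1(n,m) Δ^k r^m = S_{2,r}(n+r, k+r | λ), where Δ^k r^m = Σ_{l=0}^{k} C(k,l) (−1)^{k−l} (l+r)^m. -/

import Mathlib

open Finset

/-- The degenerate falling factorial `(x|λ)_n = x(x-λ)(x-2λ)⋯(x-(n-1)λ)`. -/
noncomputable def degFall (x lam : ℝ) (n : ℕ) : ℝ := ∏ i ∈ Finset.range n, (x - i * lam)

/-- The formal power series `(1+λt)^{y/λ} = Σ_{m=0}^∞ (y|λ)_m t^m/m!`. -/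
noncomputable def degExp (lam y : ℝ) : PowerSeries ℝ :=
  PowerSeries.mk fun m => degFall y lam m / m.factorial

/-- The degenerate Stirling numbers of the second kind `S_{2,λ}(n,k)`, defined by
`(1/k!)((1+λt)^{1/λ} - 1)^k = Σ_{n=k}^∞ S_{2,λ}(n,k) t^n/n!`. -/
noncomputable def degStirling2 (lam : ℝ) (n k : ℕ) : ℝ :=
  (n.factorial : ℝ) *
    PowerSeries.coeff n (((k.factorial : ℝ))⁻¹ • (degExp lam 1 - 1) ^ k)

/-- The extended degenerate Stirling numbers of the second kind `S_{2,r}(n+r,k+r|λ)`,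
defined by `(1/k!)(1+λt)^{r/λ}((1+λt)^{1/λ} - 1)^k = Σ_{n=k}^∞ S_{2,r}(n+r,k+r|λ) t^n/n!`. -/
noncomputable def extDegStirling2 (lam : ℝ) (r n k : ℕ) : ℝ :=
  (n.factorial : ℝ) *
    PowerSeries.coeff n
      (((k.factorial : ℝ))⁻¹ • (degExp lam r * (degExp lam 1 - 1) ^ k))

/-- The exponential `e^f = Σ_{k=0}^∞ f^k / k!` of a formal power series, computed
coefficientwise (the coefficientwise sums converge when `f` has zero constant term). -/
noncomputable def expComp (f : PowerSeries ℝ) : PowerSeries ℝ :=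
  PowerSeries.mk fun n => ∑' k : ℕ, PowerSeries.coeff n (f ^ k) / k.factorial

/-- The degenerate Bell polynomials, defined by
`e^{x((1+λt)^{1/λ} - 1)} = Σ_{n=0}^∞ Bel_{n,λ}(x) t^n/n!`. -/
noncomputable def degBell (lam x : ℝ) (n : ℕ) : ℝ :=
  (n.factorial : ℝ) * PowerSeries.coeff n (expComp (x • (degExp lam 1 - 1)))

/-- The extended degenerate Bell polynomials, defined by
`(1+λt)^{r/λ} e^{x((1+λt)^{1/λ} - 1)} = Σ_{n=0}^∞ Bel^{(r)}_{n,λ}(x) t^n/n!`. -/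
noncomputable def extDegBell (lam : ℝ) (r : ℕ) (x : ℝ) (n : ℕ) : ℝ :=
  (n.factorial : ℝ) *
    PowerSeries.coeff n (degExp lam r * expComp (x • (degExp lam 1 - 1)))

/-- The signed Stirling numbers of the first kind `S_1(n,k)`, defined by
`(x)_n = x(x-1)⋯(x-n+1) = Σ_{k=0}^n S_1(n,k) x^k`. -/
noncomputable def stirling1 (n k : ℕ) : ℝ :=
  (∏ i ∈ Finset.range n, (Polynomial.X - Polynomial.C (i : ℝ))).coeff k

/-- The Stirling numbers of the second kind, defined by
`(1/k!)(e^t - 1)^k = Σ_{n=k}^∞ S_2(n,k) t^n/n!`. -/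
noncomputable def stirling2 (n k : ℕ) : ℝ :=
  (n.factorial : ℝ) *
    PowerSeries.coeff n (((k.factorial : ℝ))⁻¹ • (PowerSeries.exp ℝ - 1) ^ k)

/-- The r-Stirling numbers of the second kind `S_{2,r}(n+r,k+r)`, defined by
`e^{rt}(1/k!)(e^t - 1)^k = Σ_{n=0}^∞ S_{2,r}(n+r,k+r) t^n/n!`. -/
noncomputable def rStirling2 (r n k : ℕ) : ℝ :=
  (n.factorial : ℝ) *
    PowerSeries.coeff n
      (PowerSeries.rescale (r : ℝ) (PowerSeries.exp ℝ) *
        ((k.factorial : ℝ))⁻¹ • (PowerSeries.exp ℝ - 1) ^ k)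

/-- The ordinary falling factorial `(x)_k = x(x-1)⋯(x-k+1)`. -/
noncomputable def fallFact (x : ℝ) (k : ℕ) : ℝ := ∏ i ∈ Finset.range k, (x - i)

/-! Expanding `((1+λt)^{1/λ} - 1)^k` binomially and using `(1+λt)^{a/λ}(1+λt)^{b/λ} = (1+λt)^{(a+b)/λ}`
turns `k! S_{2,r}(n+r,k+r|λ)` into `Σ_l C(k,l)(-1)^{k-l} (l+r|λ)_n`; and `(x|λ)_n` is the
polynomial `(x)_n` with its roots scaled by `λ`, so `(x|λ)_n = Σ_m S_1(n,m) λ^{n-m} x^m`. -/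

namespace Polynomial

lemma prod_scaleRoots {R ι : Type*} [CommRing R] [NoZeroDivisors R] (s : Finset ι)
    (p : ι → R[X]) (r : R) : (∏ i ∈ s, p i).scaleRoots r = ∏ i ∈ s, (p i).scaleRoots r := by
  classical
  induction s using Finset.induction_on with
  | empty => simp
  | insert i s hi ih => rw [prod_insert hi, prod_insert hi, mul_scaleRoots_of_noZeroDivisors, ih]

end Polynomial

lemma degFall_succ (x lam : ℝ) (n : ℕ) :
    degFall x lam (n + 1) = degFall x lam n * (x - n * lam) :=
  prod_range_succ _ _

open Polynomial in
lemma degFall_eq_eval_scaleRoots (x lam : ℝ) (n : ℕ) :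
    degFall x lam n = ((∏ i ∈ range n, (X - C (i : ℝ))).scaleRoots lam).eval x := by
  simp only [degFall, prod_scaleRoots, X_sub_C_scaleRoots, eval_prod, eval_sub, eval_X, eval_C]

open Polynomial in
lemma degFall_eq_sum_stirling1 (x lam : ℝ) (n : ℕ) :
    degFall x lam n = ∑ m ∈ range (n + 1), stirling1 n m * lam ^ (n - m) * x ^ m := by
  rw [degFall_eq_eval_scaleRoots, eval_eq_sum_range, natDegree_scaleRoots,
    natDegree_finsetProd_X_sub_C_eq_card, card_range]
  simp only [coeff_scaleRoots, natDegree_finsetProd_X_sub_C_eq_card, card_range, stirling1]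

/-- The degenerate Chu–Vandermonde identity. -/
lemma degFall_add (lam a b : ℝ) (n : ℕ) :
    degFall (a + b) lam n =
      ∑ ij ∈ antidiagonal n, (n.choose ij.1 : ℝ) * (degFall a lam ij.1 * degFall b lam ij.2) := by
  induction n with
  | zero => simp [degFall]
  | succ n ih =>
    rw [degFall_succ, ih, sum_antidiagonal_choose_succ_mul
      (fun i j => degFall a lam i * degFall b lam j), ← sum_add_distrib, sum_mul]
    refine sum_congr rfl fun ij hij => ?_
    rw [Finset.HasAntidiagonal.mem_antidiagonal] at hij
    rw [← Nat.choose_symm_of_eq_add hij.symm, degFall_succ, degFall_succ, ← hij]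
    push_cast
    ring

lemma coeff_degExp (lam y : ℝ) (n : ℕ) :
    PowerSeries.coeff n (degExp lam y) = degFall y lam n / n.factorial :=
  PowerSeries.coeff_mk _ _

lemma degExp_mul (lam a b : ℝ) : degExp lam a * degExp lam b = degExp lam (a + b) := by
  ext n
  rw [PowerSeries.coeff_mul, coeff_degExp, degFall_add, sum_div]
  refine sum_congr rfl fun ij hij => ?_
  obtain rfl := Finset.HasAntidiagonal.mem_antidiagonal.mp hij
  rw [coeff_degExp, coeff_degExp, Nat.cast_choose ℝ (Nat.le_add_right _ _), Nat.add_sub_cancel_left]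
  field_simp

lemma degExp_zero (lam : ℝ) : degExp lam 0 = 1 := by
  ext (_ | m)
  · simp [coeff_degExp, degFall]
  · simp [coeff_degExp, degFall, prod_range_succ']

lemma degExp_one_pow (lam : ℝ) (l : ℕ) : degExp lam 1 ^ l = degExp lam l := by
  induction l with
  | zero => simp [degExp_zero]
  | succ l ih => rw [pow_succ, ih, degExp_mul]; push_cast; rfl

lemma degExp_mul_degExp_one_sub_one_pow (lam y : ℝ) (k : ℕ) :
    degExp lam y * (degExp lam 1 - 1) ^ k =
      ∑ l ∈ range (k + 1), ((-1 : ℝ) ^ (k - l) * k.choose l) • degExp lam (l + y) := by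
  rw [sub_eq_add_neg, add_pow, mul_sum]
  refine sum_congr rfl fun l _ => ?_
  rw [degExp_one_pow, ← degExp_mul, Algebra.smul_def]
  simp only [map_mul, map_pow, map_neg, map_one, map_natCast]
  ring

lemma extDegStirling2_eq_sum_degFall (lam : ℝ) (r n k : ℕ) :
    extDegStirling2 lam r n k = (k.factorial : ℝ)⁻¹ *
      ∑ l ∈ range (k + 1), (-1 : ℝ) ^ (k - l) * k.choose l * degFall ((l : ℝ) + r) lam n := by
  have hn : (n.factorial : ℝ) ≠ 0 := by positivity
  simp only [extDegStirling2, degExp_mul_degExp_one_sub_one_pow, map_smul, map_sum,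
    coeff_degExp, smul_eq_mul, mul_sum]
  refine sum_congr rfl fun l _ => ?_
  field_simp

theorem sum_stirling1_fwdDiff_eq_extDegStirling2_general (lam : ℝ) (r n k : ℕ) :
    ((k.factorial : ℝ))⁻¹ *
      ∑ m ∈ Finset.range (n + 1), lam ^ (n - m) * stirling1 n m *
        (∑ l ∈ Finset.range (k + 1),
          (k.choose l : ℝ) * (-1 : ℝ) ^ (k - l) * ((l : ℝ) + r) ^ m) =
      extDegStirling2 lam r n k := by
  rw [extDegStirling2_eq_sum_degFall]
  simp only [degFall_eq_sum_stirling1, mul_sum]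
  rw [sum_comm]
  refine sum_congr rfl fun l _ => sum_congr rfl fun m _ => ?_
  ring

theorem sum_stirling1_fwdDiff_eq_extDegStirling2 (lam : ℝ) (r n k : ℕ) (h : k ≤ n) :
    ((k.factorial : ℝ))⁻¹ *
      ∑ m ∈ Finset.range (n + 1), lam ^ (n - m) * stirling1 n m *
        (∑ l ∈ Finset.range (k + 1),
          (k.choose l : ℝ) * (-1 : ℝ) ^ (k - l) * ((l : ℝ) + r) ^ m) =
      extDegStirling2 lam r n k :=
  sum_stirling1_fwdDiff_eq_extDegStirling2_general lam r n k
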